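/- arXiv:1105.4014 — 4 statements merged into one kernel-verified Lean document; each statement's English description precedes it below -/
import Mathlib

section
/- Let m, ħ, κ > 0 and let U : ℝ → ℝ be differentiable. Let H : ℝ⁴ → ℝ, written H(x, p, θₓ, θ_p), be continuously differentiable and satisfy, for all (x, p, θₓ, θ_p) ∈ ℝ⁴, the two equations κ·m·∂H/∂p + (m/ħ)·∂H/∂θₓ = p and κ·∂H/∂x − (1/ħ)·∂H/∂θ_p = U′(x). Then there exists a function F : ℝ² → ℝ such that H(x, p, θₓ, θ_p) = (1/κ)·[p²/(2m) + U(x)] + F(p − ħκθₓ, x + ħκθ_p) for all (x, p, θₓ, θ_p). -/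
/-!
Subtracting `(1/κ)·[p²/(2m) + U(x)]` from `H` turns the two equations into homogeneous ones:
the remainder has zero derivative along the constant vector fields `(0, ħκ, 1, 0)` and
`(ħκ, 0, 0, -1)`. It is therefore constant along the corresponding lines, and sliding
`(x, p, θₓ, θ_p)` along them to `(x + ħκθ_p, p - ħκθₓ, 0, 0)` shows that it only depends on
the two characteristic coordinates.
-/

section LineConstancy

variable {E F : Type*} [NormedAddCommGroup E] [NormedSpace ℝ E] [NormedAddCommGroup F]
  [NormedSpace ℝ F]

theorem hasDerivAt_apply_add_smul {f : E → F} {a v : E} {t : ℝ}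
    (hf : DifferentiableAt ℝ f (a + t • v)) :
    HasDerivAt (fun s : ℝ => f (a + s • v)) (fderiv ℝ f (a + t • v) v) t :=
  hf.hasFDerivAt.comp_hasDerivAt t (((hasDerivAt_id t).smul_const v).const_add a |>.congr_deriv
    (one_smul ℝ v))

theorem apply_add_smul_eq_of_hasLineDerivAt_zero {f : E → F} {v : E}
    (h : ∀ z, HasLineDerivAt ℝ f 0 z v) (z : E) (s : ℝ) : f (z + s • v) = f z := by
  have hderiv : ∀ t, HasDerivAt (fun s : ℝ => f (z + s • v)) 0 t := fun t => by
    have hline : HasDerivAt (fun u : ℝ => f (z + t • v + u • v)) 0 (t - t) := by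
      rw [sub_self]
      exact h (z + t • v)
    simpa [add_assoc, ← add_smul] using hline.comp_sub_const t t
  simpa using is_const_of_deriv_eq_zero (fun t => (hderiv t).differentiableAt)
    (fun t => (hderiv t).deriv) s 0

end LineConstancy

noncomputable def classicalHamiltonian (m : ℝ) (U : ℝ → ℝ) (x p : ℝ) : ℝ :=
  p ^ 2 / (2 * m) + U x

noncomputable def residualHamiltonian (m κ : ℝ) (U : ℝ → ℝ) (H : ℝ × ℝ × ℝ × ℝ → ℝ)
    (z : ℝ × ℝ × ℝ × ℝ) : ℝ :=
  H z - (1 / κ) * classicalHamiltonian m U z.1 z.2.1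

section Characteristics

variable {m hbar κ : ℝ} {U : ℝ → ℝ} {H : ℝ × ℝ × ℝ × ℝ → ℝ}

theorem hasLineDerivAt_residualHamiltonian_momentum (hH : Differentiable ℝ H)
    (hm : m ≠ 0) (hh : hbar ≠ 0) (hκ : κ ≠ 0)
    (heq : ∀ x p tx tp : ℝ,
      κ * m * deriv (fun q => H (x, q, tx, tp)) p
        + (m / hbar) * deriv (fun t => H (x, p, t, tp)) tx = p)
    (z : ℝ × ℝ × ℝ × ℝ) :
    HasLineDerivAt ℝ (residualHamiltonian m κ U H) 0 z (0, hbar * κ, 1, 0) := by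
  obtain ⟨x, p, tx, tp⟩ := z
  have hp : deriv (fun q => H (x, q, tx, tp)) p = fderiv ℝ H (x, p, tx, tp) (0, 1, 0, 0) := by
    simpa using (hasDerivAt_apply_add_smul (a := (x, 0, tx, tp)) (v := (0, 1, 0, 0)) (t := p)
      (hH _)).deriv
  have htx : deriv (fun t => H (x, p, t, tp)) tx = fderiv ℝ H (x, p, tx, tp) (0, 0, 1, 0) := by
    simpa using (hasDerivAt_apply_add_smul (a := (x, p, 0, tp)) (v := (0, 0, 1, 0)) (t := tx)
      (hH _)).deriv
  have hdir : ((0, hbar * κ, 1, 0) : ℝ × ℝ × ℝ × ℝ) =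
      (hbar * κ) • (0, 1, 0, 0) + (0, 0, 1, 0) := by
    simp
  have hkin : HasDerivAt (fun s : ℝ => (1 / κ) * classicalHamiltonian m U x (p + s * (hbar * κ)))
      ((1 / κ) * (2 * p * (hbar * κ) / (2 * m))) 0 := by
    have hline : HasDerivAt (fun s : ℝ => p + s * (hbar * κ)) (hbar * κ) 0 := by
      simpa using ((hasDerivAt_id (0 : ℝ)).mul_const (hbar * κ)).const_add p
    simpa [classicalHamiltonian] using
      (((hline.pow 2).div_const (2 * m)).add_const (U x)).const_mul (1 / κ)
  rw [HasLineDerivAt]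
  convert (hasDerivAt_apply_add_smul (a := (x, p, tx, tp)) (v := (0, hbar * κ, 1, 0)) (t := 0)
      (hH _)).sub hkin using 1
  · ext s
    simp [residualHamiltonian]
  · rw [zero_smul, add_zero, hdir, map_add, map_smul, ← hp, ← htx, smul_eq_mul]
    linear_combination (norm := (field_simp; ring)) -(hbar / m) * heq x p tx tp

theorem hasLineDerivAt_residualHamiltonian_position (hH : Differentiable ℝ H)
    (hU : Differentiable ℝ U) (hh : hbar ≠ 0) (hκ : κ ≠ 0)
    (heq : ∀ x p tx tp : ℝ,
      κ * deriv (fun y => H (y, p, tx, tp)) x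
        - (1 / hbar) * deriv (fun t => H (x, p, tx, t)) tp = deriv U x)
    (z : ℝ × ℝ × ℝ × ℝ) :
    HasLineDerivAt ℝ (residualHamiltonian m κ U H) 0 z (hbar * κ, 0, 0, -1) := by
  obtain ⟨x, p, tx, tp⟩ := z
  have hx : deriv (fun y => H (y, p, tx, tp)) x = fderiv ℝ H (x, p, tx, tp) (1, 0, 0, 0) := by
    simpa using (hasDerivAt_apply_add_smul (a := (0, p, tx, tp)) (v := (1, 0, 0, 0)) (t := x)
      (hH _)).deriv
  have htp : deriv (fun t => H (x, p, tx, t)) tp = fderiv ℝ H (x, p, tx, tp) (0, 0, 0, 1) := by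
    simpa using (hasDerivAt_apply_add_smul (a := (x, p, tx, 0)) (v := (0, 0, 0, 1)) (t := tp)
      (hH _)).deriv
  have hdir : ((hbar * κ, 0, 0, -1) : ℝ × ℝ × ℝ × ℝ) =
      (hbar * κ) • (1, 0, 0, 0) + (-1 : ℝ) • (0, 0, 0, 1) := by
    simp
  have hpot : HasDerivAt (fun s : ℝ => (1 / κ) * classicalHamiltonian m U (x + s * (hbar * κ)) p)
      ((1 / κ) * (deriv U x * (hbar * κ))) 0 := by
    have hline : HasDerivAt (fun s : ℝ => x + s * (hbar * κ)) (hbar * κ) 0 := by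
      simpa using ((hasDerivAt_id (0 : ℝ)).mul_const (hbar * κ)).const_add x
    have hU' : HasDerivAt U (deriv U x) (x + 0 * (hbar * κ)) := by
      simpa using (hU x).hasDerivAt
    simpa [classicalHamiltonian] using ((hU'.comp 0 hline).const_add _).const_mul (1 / κ)
  rw [HasLineDerivAt]
  convert (hasDerivAt_apply_add_smul (a := (x, p, tx, tp)) (v := (hbar * κ, 0, 0, -1)) (t := 0)
      (hH _)).sub hpot using 1
  · ext s
    simp [residualHamiltonian, sub_eq_add_neg]
  · rw [zero_smul, add_zero, hdir, map_add, map_smul, map_smul, ← hx, ← htp, smul_eq_mul,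
      smul_eq_mul]
    linear_combination (norm := (field_simp; ring)) -hbar * heq x p tx tp

end Characteristics

theorem apply_eq_apply_characteristic {F : Type*} [NormedAddCommGroup F] [NormedSpace ℝ F]
    {f : ℝ × ℝ × ℝ × ℝ → F} {c : ℝ}
    (hmom : ∀ z, HasLineDerivAt ℝ f 0 z (0, c, 1, 0))
    (hpos : ∀ z, HasLineDerivAt ℝ f 0 z (c, 0, 0, -1)) (x p tx tp : ℝ) :
    f (x, p, tx, tp) = f (x + c * tp, p - c * tx, 0, 0) :=
  calc f (x, p, tx, tp)
      = f ((x, p - c * tx, 0, tp) + tx • (0, c, 1, 0)) := by congr 1; ext <;> simp; ring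
    _ = f (x, p - c * tx, 0, tp) := apply_add_smul_eq_of_hasLineDerivAt_zero hmom _ _
    _ = f ((x + c * tp, p - c * tx, 0, 0) + (-tp) • (c, 0, 0, -1)) := by
      congr 1; ext <;> simp; ring
    _ = f (x + c * tp, p - c * tx, 0, 0) := apply_add_smul_eq_of_hasLineDerivAt_zero hpos _ _

/-- Let `m, ħ, κ > 0` and `U : ℝ → ℝ` differentiable. Let `H (x, p, θₓ, θ_p)` be
continuously differentiable and satisfy
`κ·m·∂H/∂p + (m/ħ)·∂H/∂θₓ = p` and `κ·∂H/∂x − (1/ħ)·∂H/∂θ_p = U′(x)` everywhere.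
Then there is `F : ℝ² → ℝ` with
`H (x, p, θₓ, θ_p) = (1/κ)·[p²/(2m) + U(x)] + F (p − ħκθₓ, x + ħκθ_p)`. -/
theorem unified_hamiltonian_form (m hbar κ : ℝ) (hm : 0 < m) (hh : 0 < hbar)
    (hκ : 0 < κ) (U : ℝ → ℝ) (hU : Differentiable ℝ U)
    (H : ℝ × ℝ × ℝ × ℝ → ℝ) (hH : ContDiff ℝ 1 H)
    (heq1 : ∀ x p tx tp : ℝ,
      κ * m * deriv (fun q => H (x, q, tx, tp)) p
        + (m / hbar) * deriv (fun t => H (x, p, t, tp)) tx = p)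
    (heq2 : ∀ x p tx tp : ℝ,
      κ * deriv (fun y => H (y, p, tx, tp)) x
        - (1 / hbar) * deriv (fun t => H (x, p, tx, t)) tp = deriv U x) :
    ∃ F : ℝ → ℝ → ℝ, ∀ x p tx tp : ℝ,
      H (x, p, tx, tp) = (1 / κ) * (p ^ 2 / (2 * m) + U x)
        + F (p - hbar * κ * tx) (x + hbar * κ * tp) := by
  have hd : Differentiable ℝ H := hH.differentiable one_ne_zero
  refine ⟨fun u v => residualHamiltonian m κ U H (v, u, 0, 0), fun x p tx tp => ?_⟩
  have hres := apply_eq_apply_characteristic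
    (hasLineDerivAt_residualHamiltonian_momentum hd hm.ne' hh.ne' hκ.ne' heq1)
    (hasLineDerivAt_residualHamiltonian_position hd hU hh.ne' hκ.ne' heq2) x p tx tp
  dsimp only
  rw [← hres, residualHamiltonian, classicalHamiltonian]
  ring
end

section
/- Let m > 0, let U : ℝ → ℝ be differentiable, let f : ℝ² → ℝ be real-valued, and let ψ : ℝ³ → ℂ, written ψ(t, x, p), be differentiable and satisfy i·∂ψ/∂t + i·(p/m)·∂ψ/∂x − i·U′(x)·∂ψ/∂p − f(x, p)·ψ = 0 everywhere. Then the function ρ(t, x, p) = |ψ(t, x, p)|² satisfies the classical Liouville equation ∂ρ/∂t = −(p/m)·∂ρ/∂x + U′(x)·∂ρ/∂p everywhere. -/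
open Complex
open scoped InnerProductSpace

theorem HasDerivAt.normSq {g : ℝ → ℂ} {g' : ℂ} {t : ℝ} (h : HasDerivAt g g' t) :
    HasDerivAt (fun s => normSq (g s)) (2 * ⟪g t, g'⟫_ℝ) t := by
  simpa only [normSq_eq_norm_sq] using h.norm_sq

theorem deriv_normSq {g : ℝ → ℂ} {t : ℝ} (h : DifferentiableAt ℝ g t) :
    deriv (fun s => normSq (g s)) t = 2 * ⟪g t, deriv g t⟫_ℝ :=
  h.hasDerivAt.normSq.deriv

/-- The potential term `f ψ` rotates `∂ψ/∂t` by `i` times a real multiple of `ψ`, which is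
orthogonal to `ψ` and so drops out of `∂|ψ|²/∂t = 2 ⟪ψ, ∂ψ/∂t⟫`. -/
theorem real_inner_eq_of_kvn {z Dt Dx Dp : ℂ} {a b c : ℝ}
    (h : I * Dt + I * (a : ℂ) * Dx - I * (b : ℂ) * Dp - (c : ℂ) * z = 0) :
    ⟪z, Dt⟫_ℝ = -a * ⟪z, Dx⟫_ℝ + b * ⟪z, Dp⟫_ℝ := by
  have hDt : Dt = (-a) • Dx + b • Dp + (-c) • (I • z) := by
    simp only [real_smul, smul_eq_mul, ofReal_neg]
    linear_combination (-I) * h + (Dt + a * Dx - b * Dp) * I_sq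
  have hphase : ⟪z, I • z⟫_ℝ = 0 := real_inner_I_smul_self ℂ z
  rw [hDt, inner_add_right, inner_add_right, real_inner_smul_right, real_inner_smul_right,
    real_inner_smul_right, hphase]
  ring

theorem koopman_von_neumann_liouville_general (m : ℝ) (U : ℝ → ℝ)
    (f : ℝ → ℝ → ℝ)
    (ψ : ℝ × ℝ × ℝ → ℂ) (hψ : Differentiable ℝ ψ)
    (heq : ∀ t x p : ℝ,
      Complex.I * deriv (fun s => ψ (s, x, p)) t
        + Complex.I * ((p / m : ℝ) : ℂ) * deriv (fun y => ψ (t, y, p)) x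
        - Complex.I * ((deriv U x : ℝ) : ℂ) * deriv (fun q => ψ (t, x, q)) p
        - ((f x p : ℝ) : ℂ) * ψ (t, x, p) = 0) :
    ∀ t x p : ℝ,
      deriv (fun s => Complex.normSq (ψ (s, x, p))) t
        = -(p / m) * deriv (fun y => Complex.normSq (ψ (t, y, p))) x
          + deriv U x * deriv (fun q => Complex.normSq (ψ (t, x, q))) p := by
  intro t x p
  rw [deriv_normSq (by fun_prop), deriv_normSq (by fun_prop), deriv_normSq (by fun_prop),
    real_inner_eq_of_kvn (heq t x p)]
  ring

/-- Let `m > 0`, `U : ℝ → ℝ` differentiable, `f : ℝ² → ℝ`, and let `ψ (t, x, p)` be a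
differentiable complex-valued function satisfying
`i·∂ψ/∂t + i·(p/m)·∂ψ/∂x − i·U′(x)·∂ψ/∂p − f(x,p)·ψ = 0` everywhere.
Then `ρ(t, x, p) = |ψ(t, x, p)|²` satisfies the classical Liouville equation
`∂ρ/∂t = −(p/m)·∂ρ/∂x + U′(x)·∂ρ/∂p` everywhere. -/
theorem koopman_von_neumann_liouville (m : ℝ) (hm : 0 < m) (U : ℝ → ℝ)
    (hU : Differentiable ℝ U) (f : ℝ → ℝ → ℝ)
    (ψ : ℝ × ℝ × ℝ → ℂ) (hψ : Differentiable ℝ ψ)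
    (heq : ∀ t x p : ℝ,
      Complex.I * deriv (fun s => ψ (s, x, p)) t
        + Complex.I * ((p / m : ℝ) : ℂ) * deriv (fun y => ψ (t, y, p)) x
        - Complex.I * ((deriv U x : ℝ) : ℂ) * deriv (fun q => ψ (t, x, q)) p
        - ((f x p : ℝ) : ℂ) * ψ (t, x, p) = 0) :
    ∀ t x p : ℝ,
      deriv (fun s => Complex.normSq (ψ (s, x, p))) t
        = -(p / m) * deriv (fun y => Complex.normSq (ψ (t, y, p))) x
          + deriv U x * deriv (fun q => Complex.normSq (ψ (t, x, q))) p :=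
  koopman_von_neumann_liouville_general m U f ψ hψ heq
end

section
/- Let m, ħ, κ > 0, let U : ℝ → ℝ, and let Ψ : ℝ³ → ℂ, written Ψ(t, x, λ_p), be twice continuously differentiable and satisfy iħ·∂Ψ/∂t = (ħ/m)·∂²Ψ/∂λ_p∂x + (1/κ)·[U(x − ħκλ_p/2) − U(x + ħκλ_p/2)]·Ψ everywhere. Define ρ : ℝ³ → ℂ by ρ(t, u, v) = Ψ(t, (u+v)/2, (v−u)/(ħκ)). Then ρ satisfies iħκ·∂ρ/∂t = ((ħκ)²/(2m))·(∂²ρ/∂v² − ∂²ρ/∂u²) + [U(u) − U(v)]·ρ everywhere. -/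
/-!
In the coordinates `x = (u + v) / 2`, `λ_p = (v - u) / (ħκ)` one has
`∂_v = ½ ∂_x + (ħκ)⁻¹ ∂_{λ_p}` and `∂_u = ½ ∂_x - (ħκ)⁻¹ ∂_{λ_p}`. The pure second derivatives
cancel in `∂_v² - ∂_u²`, and by symmetry of the second derivative the mixed ones add up to
`(2 / ħκ) ∂_x ∂_{λ_p}`, while the potential arguments `x ∓ ħκ λ_p / 2` become `u` and `v`.
Multiplying the equation for `Ψ` by `κ` gives the equation for `ρ`.
-/

open Complex

section

variable {𝕜 E F : Type*} [NontriviallyNormedField 𝕜] [NormedAddCommGroup E] [NormedSpace 𝕜 E]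
  [NormedAddCommGroup F] [NormedSpace 𝕜 F] {f : E → F} {p w : E}

theorem ContinuousLinearMap.apply_add_add_sub_apply_sub_sub (B : E →L[𝕜] E →L[𝕜] F)
    (hB : ∀ x y, B x y = B y x) (x y : E) :
    B (x + y) (x + y) - B (x - y) (x - y) = (4 : 𝕜) • B x y := by
  simp only [map_add, map_sub, add_apply, sub_apply, hB y x]
  module

theorem hasDerivAt_comp_add_smul {s : 𝕜} (hf : DifferentiableAt 𝕜 f (p + s • w)) :
    HasDerivAt (fun s : 𝕜 => f (p + s • w)) (fderiv 𝕜 f (p + s • w) w) s := by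
  have hline : HasDerivAt (fun s : 𝕜 => p + s • w) w s := by
    simpa using ((hasDerivAt_id s).smul_const w).const_add p
  exact hf.hasFDerivAt.comp_hasDerivAt s hline

theorem deriv_comp_add_smul (hf : Differentiable 𝕜 f) :
    deriv (fun s : 𝕜 => f (p + s • w)) = fun s => fderiv 𝕜 f (p + s • w) w :=
  funext fun _ => (hasDerivAt_comp_add_smul (hf _)).deriv

theorem deriv_fderiv_apply_comp_add_smul (hf : ContDiff 𝕜 2 f) (w' : E) (s : 𝕜) :
    deriv (fun s : 𝕜 => fderiv 𝕜 f (p + s • w) w') s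
      = fderiv 𝕜 (fderiv 𝕜 f) (p + s • w) w w' := by
  have hf' : Differentiable 𝕜 (fderiv 𝕜 f) :=
    (hf.fderiv_right (m := 1) le_rfl).differentiable one_ne_zero
  exact ((hasDerivAt_comp_add_smul (hf' _)).clm_apply (hasDerivAt_const s w')).deriv.trans
    (by simp)

theorem deriv_deriv_comp_add_smul (hf : ContDiff 𝕜 2 f) (s : 𝕜) :
    deriv (deriv fun s : 𝕜 => f (p + s • w)) s = fderiv 𝕜 (fderiv 𝕜 f) (p + s • w) w w := by
  rw [deriv_comp_add_smul (hf.differentiable two_ne_zero), deriv_fderiv_apply_comp_add_smul hf]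

theorem deriv_deriv_comp_add_smul_add_smul (hf : ContDiff 𝕜 2 f) (w' : E) (y l : 𝕜) :
    deriv (fun y : 𝕜 => deriv (fun l : 𝕜 => f (p + y • w + l • w')) l) y
      = fderiv 𝕜 (fderiv 𝕜 f) (p + y • w + l • w') w w' := by
  simp_rw [deriv_comp_add_smul (hf.differentiable two_ne_zero), add_right_comm p _ (l • w')]
  exact deriv_fderiv_apply_comp_add_smul hf w' y

end

theorem deriv_deriv_sub_deriv_deriv_eq_smul_mixed {G F : Type*} [NormedAddCommGroup G]
    [NormedSpace ℝ G] [NormedAddCommGroup F] [NormedSpace ℝ F] {Ψ : G × ℝ × ℝ → F}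
    (hΨ : ContDiff ℝ 2 Ψ) (c : ℝ) (t : G) (u v : ℝ) :
    deriv (deriv fun v' => Ψ (t, (u + v') / 2, (v' - u) / c)) v
        - deriv (deriv fun u' => Ψ (t, (u' + v) / 2, (v - u') / c)) u
      = (2 / c) • deriv (fun y => deriv (fun l => Ψ (t, y, l)) ((v - u) / c)) ((u + v) / 2) := by
  set p : G × ℝ × ℝ := (t, (u + v) / 2, (v - u) / c)
  set B := fderiv ℝ (fderiv ℝ Ψ) p
  set x : G × ℝ × ℝ := (0, 1 / 2, 0)
  set y : G × ℝ × ℝ := (0, 0, 1 / c)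
  have hvv : deriv (deriv fun v' => Ψ (t, (u + v') / 2, (v' - u) / c)) v
      = B (x + y) (x + y) := by
    have hf : (fun v' => Ψ (t, (u + v') / 2, (v' - u) / c))
        = fun s => Ψ ((t, u / 2, -u / c) + s • (x + y)) := by
      funext s; congr 1; ext <;> simp [x, y] <;> ring
    have hpt : (t, u / 2, -u / c) + v • (x + y) = p := by ext <;> simp [p, x, y] <;> ring
    rw [hf, deriv_deriv_comp_add_smul hΨ, hpt]
  have huu : deriv (deriv fun u' => Ψ (t, (u' + v) / 2, (v - u') / c)) u
      = B (x - y) (x - y) := by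
    have hf : (fun u' => Ψ (t, (u' + v) / 2, (v - u') / c))
        = fun s => Ψ ((t, v / 2, v / c) + s • (x - y)) := by
      funext s; congr 1; ext <;> simp [x, y] <;> ring
    have hpt : (t, v / 2, v / c) + u • (x - y) = p := by ext <;> simp [p, x, y] <;> ring
    rw [hf, deriv_deriv_comp_add_smul hΨ, hpt]
  have hmixed : deriv (fun y => deriv (fun l => Ψ (t, y, l)) ((v - u) / c)) ((u + v) / 2)
      = B (0, 1, 0) (0, 0, 1) := by
    have hf : ∀ y', (fun l => Ψ (t, y', l))
        = fun l => Ψ ((t, 0, 0) + y' • (0, 1, 0) + l • (0, 0, 1)) := by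
      intro y'; funext l; congr 1; ext <;> simp
    have hpt : (t, 0, 0) + ((u + v) / 2) • ((0, 1, 0) : G × ℝ × ℝ) + ((v - u) / c) • (0, 0, 1)
        = p := by
      ext <;> simp [p]
    simp_rw [hf, deriv_deriv_comp_add_smul_add_smul hΨ, hpt]
    rfl
  have hx : x = (1 / 2 : ℝ) • (0, 1, 0) := by ext <;> simp [x]
  have hy : y = (1 / c) • (0, 0, 1) := by ext <;> simp [y]
  rw [hvv, huu, hmixed, B.apply_add_add_sub_apply_sub_sub
    (hΨ.contDiffAt.isSymmSndFDerivAt (by simp)), hx, hy, map_smul, map_smul,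
    smul_apply, smul_smul, smul_smul]
  congr 1
  ring

theorem unified_to_von_neumann_general (m hbar κ : ℝ) (hh : 0 < hbar) (hκ : 0 < κ)
    (U : ℝ → ℝ) (Ψ : ℝ × ℝ × ℝ → ℂ) (hΨ : ContDiff ℝ 2 Ψ)
    (heq : ∀ t x lp : ℝ,
      Complex.I * (hbar : ℂ) * deriv (fun s => Ψ (s, x, lp)) t
        = ((hbar / m : ℝ) : ℂ) * deriv (fun y => deriv (fun l => Ψ (t, y, l)) lp) x
          + ((1 / κ : ℝ) : ℂ)
            * ((U (x - hbar * κ * lp / 2) - U (x + hbar * κ * lp / 2) : ℝ) : ℂ)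
            * Ψ (t, x, lp)) :
    ∀ t u v : ℝ,
      Complex.I * ((hbar * κ : ℝ) : ℂ)
          * deriv (fun s => Ψ (s, (u + v) / 2, (v - u) / (hbar * κ))) t
        = (((hbar * κ) ^ 2 / (2 * m) : ℝ) : ℂ)
            * (deriv (deriv (fun v' => Ψ (t, (u + v') / 2, (v' - u) / (hbar * κ)))) v
              - deriv (deriv (fun u' => Ψ (t, (u' + v) / 2, (v - u') / (hbar * κ)))) u)
          + ((U u - U v : ℝ) : ℂ) * Ψ (t, (u + v) / 2, (v - u) / (hbar * κ)) := by
  intro t u v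
  have hc : hbar * κ ≠ 0 := (mul_pos hh hκ).ne'
  have hU_left : (u + v) / 2 - hbar * κ * ((v - u) / (hbar * κ)) / 2 = u := by
    field_simp; ring
  have hU_right : (u + v) / 2 + hbar * κ * ((v - u) / (hbar * κ)) / 2 = v := by
    field_simp; ring
  have key := heq t ((u + v) / 2) ((v - u) / (hbar * κ))
  rw [hU_left, hU_right] at key
  rw [deriv_deriv_sub_deriv_deriv_eq_smul_mixed hΨ, Complex.real_smul]
  have hκ' : (κ : ℂ) ≠ 0 := mod_cast hκ.ne'
  push_cast at key ⊢
  field_simp at key ⊢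
  linear_combination key

/-- Let `m, ħ, κ > 0`, `U : ℝ → ℝ`, and let `Ψ (t, x, λ_p)` be a twice continuously
differentiable complex-valued function satisfying
`iħ·∂Ψ/∂t = (ħ/m)·∂²Ψ/∂λ_p∂x + (1/κ)·[U(x − ħκλ_p/2) − U(x + ħκλ_p/2)]·Ψ` everywhere.
Define `ρ(t, u, v) = Ψ(t, (u+v)/2, (v−u)/(ħκ))`. Then `ρ` satisfies
`iħκ·∂ρ/∂t = ((ħκ)²/(2m))·(∂²ρ/∂v² − ∂²ρ/∂u²) + [U(u) − U(v)]·ρ` everywhere. -/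
theorem unified_to_von_neumann (m hbar κ : ℝ) (hm : 0 < m) (hh : 0 < hbar) (hκ : 0 < κ)
    (U : ℝ → ℝ) (Ψ : ℝ × ℝ × ℝ → ℂ) (hΨ : ContDiff ℝ 2 Ψ)
    (heq : ∀ t x lp : ℝ,
      Complex.I * (hbar : ℂ) * deriv (fun s => Ψ (s, x, lp)) t
        = ((hbar / m : ℝ) : ℂ) * deriv (fun y => deriv (fun l => Ψ (t, y, l)) lp) x
          + ((1 / κ : ℝ) : ℂ)
            * ((U (x - hbar * κ * lp / 2) - U (x + hbar * κ * lp / 2) : ℝ) : ℂ)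
            * Ψ (t, x, lp)) :
    ∀ t u v : ℝ,
      Complex.I * ((hbar * κ : ℝ) : ℂ)
          * deriv (fun s => Ψ (s, (u + v) / 2, (v - u) / (hbar * κ))) t
        = (((hbar * κ) ^ 2 / (2 * m) : ℝ) : ℂ)
            * (deriv (deriv (fun v' => Ψ (t, (u + v') / 2, (v' - u) / (hbar * κ)))) v
              - deriv (deriv (fun u' => Ψ (t, (u' + v) / 2, (v - u') / (hbar * κ)))) u)
          + ((U u - U v : ℝ) : ℂ) * Ψ (t, (u + v) / 2, (v - u) / (hbar * κ)) :=
  unified_to_von_neumann_general m hbar κ hh hκ U Ψ hΨ heq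
end

section
/- Let U : ℝ → ℝ be differentiable. Then U satisfies the functional equation U(x − α) − U(x + α) = −2α·U′(x) for all x, α ∈ ℝ if and only if there exist constants a, b, c ∈ ℝ such that U(x) = a·x² + b·x + c for all x ∈ ℝ. -/
/-!
With `s = x + α`, `t = x - α` the equation becomes Aczél's mean value equation
`U s - U t = (s - t) * h (s + t)` for `h z = U' (z / 2)`. Setting `t = 0` gives
`U s = U 0 + s * h s`, and substituting `t ↦ -t` into the equation yields
`(s - t) * (h (s + t) - h 0) = (s + t) * (h (s - t) - h 0)`, so `h` is affine and `U` quadratic.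
-/

section MeanValueEquation

variable {K : Type*} [Field K] [NeZero (2 : K)]

theorem sub_eq_mul_apply_half_add {U D : K → K}
    (hU : ∀ x α, U (x - α) - U (x + α) = -2 * α * D x) (s t : K) :
    U s - U t = (s - t) * D ((s + t) / 2) := by
  have h := hU ((s + t) / 2) ((s - t) / 2)
  rw [show (s + t) / 2 - (s - t) / 2 = t by field_simp; ring,
    show (s + t) / 2 + (s - t) / 2 = s by field_simp; ring] at h
  have h2 : 2 * ((s - t) / 2) = s - t := mul_div_cancel₀ _ two_ne_zero
  linear_combination -h + D ((s + t) / 2) * h2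

theorem apply_eq_affine_of_mul_apply_sub_mul_apply {h : K → K}
    (hh : ∀ s t, s * h s - t * h t = (s - t) * h (s + t)) (u : K) :
    h u = h 0 + (h 1 - h 0) * u := by
  have odd : ∀ t, t * h (-t) = 2 * t * h 0 - t * h t := fun t => by
    have := hh t (-t)
    rw [add_neg_cancel] at this
    linear_combination this
  have swap : ∀ s t, (s - t) * (h (s + t) - h 0) = (s + t) * (h (s - t) - h 0) := fun s t => by
    have := hh s (-t)
    rw [← sub_eq_add_neg, sub_neg_eq_add] at this
    linear_combination this - hh s t - odd t
  have := swap ((u + 1) / 2) ((u - 1) / 2)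
  rw [show (u + 1) / 2 - (u - 1) / 2 = 1 by field_simp; ring,
    show (u + 1) / 2 + (u - 1) / 2 = u by field_simp; ring] at this
  linear_combination this

theorem eq_quadratic_of_sub_eq_mul_apply_add {U h : K → K}
    (hU : ∀ s t, U s - U t = (s - t) * h (s + t)) (x : K) :
    U x = (h 1 - h 0) * x ^ 2 + h 0 * x + U 0 := by
  have hU0 : ∀ s, U s - U 0 = s * h s := fun s => by simpa using hU s 0
  have hh : ∀ s t, s * h s - t * h t = (s - t) * h (s + t) := fun s t => by
    linear_combination hU s t - hU0 s + hU0 t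
  linear_combination hU0 x + x * apply_eq_affine_of_mul_apply_sub_mul_apply hh x

end MeanValueEquation

theorem deriv_quadratic {𝕜 : Type*} [NontriviallyNormedField 𝕜] (a b c x : 𝕜) :
    deriv (fun x => a * x ^ 2 + b * x + c) x = 2 * a * x + b := by
  have h : HasDerivAt (fun x => a * x ^ 2 + b * x + c) (a * (2 * x) + b) x := by
    simpa using
      (((hasDerivAt_pow 2 x).const_mul a).add ((hasDerivAt_id x).const_mul b)).add_const c
  rw [h.deriv]
  ring

theorem quadratic_potential_iff_general (U : ℝ → ℝ) :
    (∀ x α : ℝ, U (x - α) - U (x + α) = -2 * α * deriv U x)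
      ↔ ∃ a b c : ℝ, ∀ x : ℝ, U x = a * x ^ 2 + b * x + c := by
  constructor
  · intro hU
    exact ⟨_, _, _, eq_quadratic_of_sub_eq_mul_apply_add (h := fun z => deriv U (z / 2))
      (sub_eq_mul_apply_half_add hU)⟩
  · rintro ⟨a, b, c, hq⟩ x α
    obtain rfl : U = fun x => a * x ^ 2 + b * x + c := funext hq
    rw [deriv_quadratic]
    ring

/-- Let `U : ℝ → ℝ` be differentiable. Then `U` satisfies
`U(x − α) − U(x + α) = −2α·U′(x)` for all `x, α ∈ ℝ` if and only if
`U` is a quadratic polynomial `U(x) = a·x² + b·x + c`. -/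
theorem quadratic_potential_iff (U : ℝ → ℝ) (hU : Differentiable ℝ U) :
    (∀ x α : ℝ, U (x - α) - U (x + α) = -2 * α * deriv U x)
      ↔ ∃ a b c : ℝ, ∀ x : ℝ, U x = a * x ^ 2 + b * x + c :=
  quadratic_potential_iff_general U
end
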